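/- Let m be a nonnegative integer, k = 4m+3, and let p < n be nonnegative integers. Let x, y, z be nonnegative integers less than 2^{n+1} with binary digits x_i, y_i, z_i, such that y ≤ ⌊(x+z)/k⌋ and x_i + y_i + z_i ≡ 0 (mod 2) for all i = p+1, p+2, ..., n, with x_n = z_n = 1 and y_n = 0. Define s_j = Σ_{i=n−j}^{n} (x_i + z_i − k·y_i)·2^{i+j−n} for j = 0, 1, ..., n−p−1. Then the sequence s_0, s_1, ..., s_{n−p−1} is Type 1 or Type 2. -/
import Mathlib


/-- The i-th binary digit of x. -/
def bitd (x i : ℕ) : ℕ := x / 2 ^ i % 2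

/-- The sequence generated by x, y, z :
s_j = Σ_{i=n−j}^{n} (x_i + z_i − k·y_i)·2^{i+j−n}. -/
def sgen (k : ℤ) (n : ℕ) (x y z : ℕ) (j : ℕ) : ℤ :=
  ∑ i ∈ Finset.Icc (n - j) n,
    ((bitd x i : ℤ) + (bitd z i : ℤ) - k * (bitd y i : ℤ)) * 2 ^ (i + j - n)

/-- Type 1 : 0 ≤ b_i < k for all i = 0, ..., n. -/
def TypeOne (k : ℤ) (n : ℕ) (b : ℕ → ℤ) : Prop :=
  ∀ i ≤ n, 0 ≤ b i ∧ b i < k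

/-- Type 2 : there is t < n with 0 ≤ b_i < k for i ≤ t and b_i ≥ k for t < i ≤ n. -/
def TypeTwo (k : ℤ) (n : ℕ) (b : ℕ → ℤ) : Prop :=
  ∃ t < n, (∀ i ≤ t, 0 ≤ b i ∧ b i < k) ∧ ∀ i, t < i → i ≤ n → k ≤ b i

def D (k : ℤ) (x y z i : ℕ) : ℤ :=
  (bitd x i : ℤ) + (bitd z i : ℤ) - k * (bitd y i : ℤ)

lemma bitd_le_one (x i : ℕ) : bitd x i ≤ 1 := by
  have : x / 2 ^ i % 2 < 2 := Nat.mod_lt _ (by norm_num)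
  unfold bitd; omega

lemma bit_sum (x M : ℕ) : ∑ i ∈ Finset.range M, bitd x i * 2 ^ i = x % 2 ^ M := by
  induction M with
  | zero => simp [Nat.mod_one]
  | succ M ih =>
    rw [Finset.sum_range_succ, ih, pow_succ, Nat.mod_mul]
    unfold bitd; ring

lemma sgen_rec (k : ℤ) (n x y z j : ℕ) (hj : j < n) :
    sgen k n x y z (j + 1) = 2 * sgen k n x y z j + D k x y z (n - (j + 1)) := by
  unfold sgen
  have h1 : Finset.Icc (n - (j + 1)) n = insert (n - (j + 1)) (Finset.Icc (n - j) n) := by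
    ext i; simp only [Finset.mem_Icc, Finset.mem_insert]; omega
  rw [h1, Finset.sum_insert (by simp only [Finset.mem_Icc]; omega)]
  have he0 : n - (j + 1) + (j + 1) - n = 0 := by omega
  rw [he0]
  have h2 : ∀ i ∈ Finset.Icc (n - j) n,
      ((bitd x i : ℤ) + (bitd z i : ℤ) - k * (bitd y i : ℤ)) * 2 ^ (i + (j + 1) - n)
      = 2 * (((bitd x i : ℤ) + (bitd z i : ℤ) - k * (bitd y i : ℤ)) * 2 ^ (i + j - n)) := by
    intro i hi
    simp only [Finset.mem_Icc] at hi
    have he : i + (j + 1) - n = (i + j - n) + 1 := by omega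
    rw [he, pow_succ]; ring
  rw [Finset.sum_congr rfl h2, ← Finset.mul_sum]
  unfold D; ring

lemma sgen_zero (k : ℤ) (n x y z : ℕ)
    (hxn : bitd x n = 1) (hzn : bitd z n = 1) (hyn : bitd y n = 0) :
    sgen k n x y z 0 = 2 := by
  unfold sgen
  rw [Nat.sub_zero, Finset.Icc_self, Finset.sum_singleton, hxn, hzn, hyn]
  norm_num

lemma full_sum (k : ℤ) (n x y z : ℕ)
    (hx : x < 2 ^ (n + 1)) (hy : y < 2 ^ (n + 1)) (hz : z < 2 ^ (n + 1)) :
    ∑ i ∈ Finset.range (n + 1), D k x y z i * 2 ^ i = (x : ℤ) + z - k * y := by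
  have key : ∀ w : ℕ, w < 2 ^ (n + 1) →
      ∑ i ∈ Finset.range (n + 1), (bitd w i : ℤ) * 2 ^ i = w := by
    intro w hw
    have h := bit_sum w (n + 1)
    rw [Nat.mod_eq_of_lt hw] at h
    calc ∑ i ∈ Finset.range (n + 1), (bitd w i : ℤ) * 2 ^ i
        = ((∑ i ∈ Finset.range (n + 1), bitd w i * 2 ^ i : ℕ) : ℤ) := by push_cast; ring
      _ = w := by rw [h]
  have hX := key x hx; have hY := key y hy; have hZ := key z hz
  have h2 : ∀ i ∈ Finset.range (n + 1), D k x y z i * 2 ^ i =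
      (bitd x i : ℤ) * 2 ^ i + (bitd z i : ℤ) * 2 ^ i - k * ((bitd y i : ℤ) * 2 ^ i) :=
    fun i _ => by unfold D; ring
  rw [Finset.sum_congr rfl h2, Finset.sum_sub_distrib, Finset.sum_add_distrib,
    ← Finset.mul_sum, hX, hY, hZ]

lemma sgen_val (k : ℤ) (n x y z : ℕ)
    (hx : x < 2 ^ (n + 1)) (hy : y < 2 ^ (n + 1)) (hz : z < 2 ^ (n + 1))
    (hxn : bitd x n = 1) (hzn : bitd z n = 1) (hyn : bitd y n = 0) :
    ∀ j ≤ n, sgen k n x y z j * 2 ^ (n - j)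
      + ∑ i ∈ Finset.range (n - j), D k x y z i * 2 ^ i = (x : ℤ) + z - k * y := by
  intro j
  induction j with
  | zero =>
    intro _
    rw [sgen_zero k n x y z hxn hzn hyn, Nat.sub_zero, ← full_sum k n x y z hx hy hz,
      Finset.sum_range_succ]
    have : D k x y z n = 2 := by unfold D; rw [hxn, hzn, hyn]; norm_num
    rw [this]; ring
  | succ j ih =>
    intro hjn
    have hj : j < n := by omega
    have ihj := ih (le_of_lt hj)
    rw [sgen_rec k n x y z j hj]
    have hr : Finset.range (n - j) = insert (n - (j+1)) (Finset.range (n - (j+1))) := by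
      ext i; simp only [Finset.mem_range, Finset.mem_insert]; omega
    rw [hr, Finset.sum_insert (by simp only [Finset.mem_range]; omega)] at ihj
    have hp : (2:ℤ) ^ (n - j) = 2 * 2 ^ (n - (j + 1)) := by
      rw [show n - j = (n - (j+1)) + 1 by omega, pow_succ]; ring
    rw [hp] at ihj
    linarith [ihj]

lemma geom2 (M : ℕ) : (∑ i ∈ Finset.range M, (2:ℤ) ^ i) = 2 ^ M - 1 := by
  induction M with
  | zero => simp
  | succ M ih => rw [Finset.sum_range_succ, ih]; ring

lemma D_le_two (k : ℤ) (hk : 0 ≤ k) (x y z i : ℕ) : D k x y z i ≤ 2 := by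
  have h1 := bitd_le_one x i
  have h2 := bitd_le_one z i
  have h3 : (0:ℤ) ≤ (bitd y i : ℤ) := Int.natCast_nonneg _
  have h1' : (bitd x i : ℤ) ≤ 1 := by exact_mod_cast h1
  have h2' : (bitd z i : ℤ) ≤ 1 := by exact_mod_cast h2
  unfold D; nlinarith

lemma D_ge_neg_k (k : ℤ) (hk : 0 ≤ k) (x y z i : ℕ) : -k ≤ D k x y z i := by
  have h3 := bitd_le_one y i
  have h3' : (bitd y i : ℤ) ≤ 1 := by exact_mod_cast h3
  have h1 : (0:ℤ) ≤ (bitd x i : ℤ) := Int.natCast_nonneg _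
  have h2 : (0:ℤ) ≤ (bitd z i : ℤ) := Int.natCast_nonneg _
  unfold D; nlinarith

lemma sgen_ge_neg_one (k : ℤ) (n x y z : ℕ)
    (hx : x < 2 ^ (n + 1)) (hy : y < 2 ^ (n + 1)) (hz : z < 2 ^ (n + 1))
    (hk : 0 ≤ k) (hineq : k * y ≤ (x:ℤ) + z)
    (hxn : bitd x n = 1) (hzn : bitd z n = 1) (hyn : bitd y n = 0)
    (j : ℕ) (hj : j ≤ n) : -1 ≤ sgen k n x y z j := by
  have hval := sgen_val k n x y z hx hy hz hxn hzn hyn j hj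
  have hL : ∑ i ∈ Finset.range (n - j), D k x y z i * 2 ^ i
      ≤ 2 * (2 ^ (n - j) - 1) := by
    calc ∑ i ∈ Finset.range (n - j), D k x y z i * 2 ^ i
        ≤ ∑ i ∈ Finset.range (n - j), 2 * 2 ^ i := by
          apply Finset.sum_le_sum
          intro i _
          have := D_le_two k hk x y z i
          have hp : (0:ℤ) < 2 ^ i := by positivity
          nlinarith
      _ = 2 * (2 ^ (n - j) - 1) := by rw [← Finset.mul_sum, geom2]
  by_contra h
  push_neg at h
  have h2 : sgen k n x y z j ≤ -2 := by omega
  have hp : (0:ℤ) < 2 ^ (n - j) := by positivity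
  nlinarith

lemma D_even (m k : ℕ) (hk : k = 4 * m + 3) (x y z p n : ℕ)
    (hpar : ∀ i, p + 1 ≤ i → i ≤ n → (bitd x i + bitd y i + bitd z i) % 2 = 0)
    (i : ℕ) (h1 : p + 1 ≤ i) (h2 : i ≤ n) : 2 ∣ D (k:ℤ) x y z i := by
  have hp := hpar i h1 h2
  have hb := bitd_le_one y i
  have hby : bitd y i = 0 ∨ bitd y i = 1 := by omega
  unfold D
  rcases hby with h | h <;> rw [h] <;> push_cast <;> subst hk <;> push_cast <;> omega

lemma sgen_even (m k : ℕ) (hk : k = 4 * m + 3) (x y z p n : ℕ) (hpn : p < n)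
    (hpar : ∀ i, p + 1 ≤ i → i ≤ n → (bitd x i + bitd y i + bitd z i) % 2 = 0)
    (j : ℕ) (hj : j ≤ n - p - 1) : 2 ∣ sgen (k:ℤ) n x y z j := by
  unfold sgen
  apply Finset.dvd_sum
  intro i hi
  simp only [Finset.mem_Icc] at hi
  have hD : 2 ∣ D (k:ℤ) x y z i := D_even m k hk x y z p n hpar i (by omega) hi.2
  exact Dvd.dvd.mul_right (by unfold D at hD; exact hD) _

theorem stmt12 (m k p n : ℕ) (hk : k = 4 * m + 3) (hpn : p < n) (x y z : ℕ)
    (hx : x < 2 ^ (n + 1)) (hy : y < 2 ^ (n + 1)) (hz : z < 2 ^ (n + 1))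
    (hineq : y ≤ (x + z) / k)
    (hpar : ∀ i, p + 1 ≤ i → i ≤ n → (bitd x i + bitd y i + bitd z i) % 2 = 0)
    (hxn : bitd x n = 1) (hzn : bitd z n = 1) (hyn : bitd y n = 0) :
    TypeOne (k : ℤ) (n - p - 1) (sgen (k : ℤ) n x y z) ∨
    TypeTwo (k : ℤ) (n - p - 1) (sgen (k : ℤ) n x y z) := by
  classical
  set N := n - p - 1 with hN
  have hkpos : 0 < k := by omega
  have hineq' : (k:ℤ) * y ≤ (x:ℤ) + z := by
    have h1 := (Nat.le_div_iff_mul_le hkpos).mp hineq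
    have h2 : k * y ≤ x + z := by rw [Nat.mul_comm]; exact h1
    exact_mod_cast h2
  have hkZ : (k:ℤ) = 4 * m + 3 := by exact_mod_cast congrArg Nat.cast hk
  have hNn : N ≤ n := by omega
  -- nonnegativity for j ≤ N
  have hnn : ∀ j ≤ N, 0 ≤ sgen (k:ℤ) n x y z j := by
    intro j hj
    have h1 := sgen_ge_neg_one (k:ℤ) n x y z hx hy hz (by positivity) hineq'
      hxn hzn hyn j (le_trans hj hNn)
    have h2 := sgen_even m k hk x y z p n hpn hpar j hj
    omega
  have heven : ∀ j ≤ N, 2 ∣ sgen (k:ℤ) n x y z j :=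
    fun j hj => sgen_even m k hk x y z p n hpn hpar j hj
  by_cases hall : ∀ j ≤ N, sgen (k:ℤ) n x y z j < (k:ℤ)
  · left
    intro i hi
    exact ⟨hnn i hi, hall i hi⟩
  · right
    push_neg at hall
    have hex : ∃ j, j ≤ N ∧ (k:ℤ) ≤ sgen (k:ℤ) n x y z j := hall
    set t' := Nat.find hex with ht'
    have hspec := Nat.find_spec hex
    rw [← ht'] at hspec
    obtain ⟨ht'N, ht'k⟩ := hspec
    have hmin : ∀ i < t', sgen (k:ℤ) n x y z i < (k:ℤ) := by
      intro i hi
      have := Nat.find_min hex hi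
      push_neg at this
      by_contra hc
      push_neg at hc
      exact absurd (this (by omega)) (not_lt.mpr hc)
    have ht'pos : 1 ≤ t' := by
      rcases Nat.eq_zero_or_pos t' with h0 | h
      · exfalso
        rw [h0, sgen_zero (k:ℤ) n x y z hxn hzn hyn] at ht'k
        omega
      · exact h
    refine ⟨t' - 1, by omega, ?_, ?_⟩
    · intro i hi
      exact ⟨hnn i (by omega), hmin i (by omega)⟩
    · have chain : ∀ i, t' ≤ i → i ≤ N → (k:ℤ) ≤ sgen (k:ℤ) n x y z i := by
        intro i hi
        induction i with
        | zero => intro _; omega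
        | succ i ih =>
          intro hiN
          rcases Nat.lt_or_ge t' (i+1) with hlt | hge
          · have hti : t' ≤ i := by omega
            have hik : (k:ℤ) ≤ sgen (k:ℤ) n x y z i := ih hti (by omega)
            have hie : 2 ∣ sgen (k:ℤ) n x y z i := heven i (by omega)
            have hodd : (k:ℤ) + 1 ≤ sgen (k:ℤ) n x y z i := by omega
            have hrec := sgen_rec (k:ℤ) n x y z i (by omega)
            have hDe : 2 ∣ D (k:ℤ) x y z (n - (i+1)) :=
              D_even m k hk x y z p n hpar (n - (i+1)) (by omega) (by omega)
            have hDg : -(k:ℤ) ≤ D (k:ℤ) x y z (n - (i+1)) :=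
              D_ge_neg_k (k:ℤ) (by positivity) x y z _
            have hDg' : -(k:ℤ) + 1 ≤ D (k:ℤ) x y z (n - (i+1)) := by omega
            rw [hrec]
            linarith
          · have : t' = i + 1 := by omega
            rw [← this]; exact ht'k
      intro i hi hiN
      exact chain i (by omega) hiN
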